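/- Discrete fundamental theorem (existence): let θ, φ : ℤ → ℝ satisfy θᵢ ∈ (0, π/2] for even i, θᵢ = 0 for odd i, φᵢ ∈ [0, π/2] for odd i, φᵢ = 0 for even i. Let γ₀ ∈ ℝ³ and let (T₀, N₀, B₀) be pairwise orthogonal unit vectors with N₀ = B₀ × T₀. Then there exist sequences γ, T, N, B : ℤ → ℝ³ with γ(0) = γ₀, (T(0), N(0), B(0)) = (T₀, N₀, B₀), satisfying for all i: γᵢ₊₁ = γᵢ + Tᵢ; for even i: Tᵢ₊₁ = cos θᵢ • Tᵢ + sin θᵢ • Nᵢ, Nᵢ₊₁ = −sin θᵢ • Tᵢ + cos θᵢ • Nᵢ, Bᵢ₊₁ = Bᵢ; for odd i: Tᵢ₊₁ = Tᵢ, Nᵢ₊₁ = cos φᵢ • Nᵢ + sin φᵢ • Bᵢ, Bᵢ₊₁ = −sin φᵢ • Nᵢ + cos φᵢ • Bᵢ. Moreover the resulting γ satisfies ‖(Dγ)ᵢ‖ = 1 for all i, the midpoint condition γᵢ = (γᵢ₊₁ + γᵢ₋₁)/2 for even i, its edge frame equals (T, N, B) (in particular Tᵉᵢ × Tᵉᵢ₊₁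 ≠ 0 for even i), the positive-twist condition holds, and for all i the angle between Tᵢ and Tᵢ₊₁ is θᵢ and the angle between Bᵢ and Bᵢ₊₁ is φᵢ. -/

import Mathlib

open RealInnerProductSpace

noncomputable section

/-- Points of a discrete curve live in `ℝ³` with the Euclidean norm. -/
abbrev E3 := EuclideanSpace ℝ (Fin 3)

/-- The cross product on `ℝ³`. -/
def cross3 (u v : E3) : E3 :=
  WithLp.toLp 2 ![u 1 * v 2 - u 2 * v 1, u 2 * v 0 - u 0 * v 2, u 0 * v 1 - u 1 * v 0]

/-!
Both frame updates rotate two vectors of the frame in the plane they span, so each step is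
invertible and the recurrence can be run forwards and backwards from index `0`; the curve is
then recovered by summing its tangents. Rotations preserve orthonormality and the orientation
`N = B × T`; since an odd step is an even step of the cyclically relabelled frame `(N, B, T)`,
it suffices to check this for the rotation of `(T, N)`. Hence every `(Tᵢ, Nᵢ, Bᵢ)` is a
positive orthonormal frame, and the remaining claims are local computations in that frame:
for even `i`, `Tᵢ × Tᵢ₊₁ = sin θᵢ • Bᵢ` with `sin θᵢ > 0` and `⟪Tᵢ, Tᵢ₊₁⟫ = cos θᵢ`;
for odd `i`, `⟪Bᵢ, Bᵢ₊₁⟫ = cos φᵢ` and `⟪Bᵢ₊₁, Nᵢ⟫ = -sin φᵢ ≤ 0`.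
-/

open Real

theorem Int.exists_seq_of_equiv {α : Type*} (e : ℤ → α ≃ α) (x₀ : α) :
    ∃ x : ℤ → α, x 0 = x₀ ∧ ∀ i, x (i + 1) = e i (x i) := by
  -- Carrying the index along turns the varying steps into one bijection `σ`, whose integer
  -- powers run the recurrence in both directions.
  set σ : Equiv.Perm (ℤ × α) := (Equiv.addRight 1).prodShear e
  have hσ : ∀ p : ℤ × α, σ p = (p.1 + 1, e p.1 p.2) := fun _ => rfl
  have hfst : ∀ (n : ℤ) (p : ℤ × α), ((σ ^ n) p).1 = p.1 + n := by
    intro n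
    induction n using Int.induction_on with
    | zero => simp
    | succ n ih => intro p; rw [zpow_add_one, Equiv.Perm.mul_apply, ih, hσ]; ring
    | pred n ih =>
      intro p
      have h := congrArg Prod.fst (σ.apply_symm_apply p)
      rw [hσ] at h
      rw [zpow_sub_one, Equiv.Perm.mul_apply, ih, Equiv.Perm.inv_def]
      omega
  refine ⟨fun n => ((σ ^ n) (0, x₀)).2, rfl, fun i => ?_⟩
  dsimp only
  rw [add_comm, zpow_one_add, Equiv.Perm.mul_apply, hσ, hfst, zero_add]

theorem Int.forall_of_step_iff {α : Type*} {P : α → Prop} {f : ℤ → α → α} {x : ℤ → α}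
    (hx : ∀ i, x (i + 1) = f i (x i)) (hP : ∀ i y, P (f i y) ↔ P y) (h0 : P (x 0)) (i : ℤ) :
    P (x i) := by
  induction i using Int.induction_on with
  | zero => exact h0
  | succ n ih => rw [hx, hP]; exact ih
  | pred n ih => rw [← hP, ← hx, sub_add_cancel]; exact ih

section RealInnerProductSpace

variable {F : Type*} [NormedAddCommGroup F] [InnerProductSpace ℝ F]

theorem norm_smul_add_smul_eq_one {u v : F} (hu : ‖u‖ = 1) (hv : ‖v‖ = 1) (huv : ⟪u, v⟫ = 0)
    {c s : ℝ} (hcs : c ^ 2 + s ^ 2 = 1) : ‖c • u + s • v‖ = 1 := by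
  have h : ‖c • u + s • v‖ ^ 2 = 1 := by
    rw [norm_add_sq_real, norm_smul, norm_smul, real_inner_smul_left, real_inner_smul_right,
      huv, hu, hv, Real.norm_eq_abs, Real.norm_eq_abs, mul_pow, mul_pow, sq_abs, sq_abs]
    linear_combination hcs
  exact (pow_eq_one_iff_of_nonneg (norm_nonneg _) two_ne_zero).mp h

theorem angle_eq_of_inner_eq_cos {u v : F} (hu : ‖u‖ = 1) (hv : ‖v‖ = 1) {a : ℝ}
    (h : ⟪u, v⟫ = cos a) (ha₀ : 0 ≤ a) (haπ : a ≤ π) : InnerProductGeometry.angle u v = a := by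
  rw [InnerProductGeometry.angle, h, hu, hv, mul_one, div_one, arccos_cos ha₀ haπ]

end RealInnerProductSpace

open Matrix in
theorem cross3_eq_crossProduct (u v : E3) :
    cross3 u v = WithLp.toLp 2 (WithLp.ofLp u ⨯₃ WithLp.ofLp v) := rfl

theorem E3.inner_eq_dotProduct (u v : E3) : ⟪u, v⟫ = WithLp.ofLp u ⬝ᵥ WithLp.ofLp v := by
  simp [EuclideanSpace.inner_eq_star_dotProduct, dotProduct_comm]

theorem cross3_add_right (u v w : E3) : cross3 u (v + w) = cross3 u v + cross3 u w := by
  simp [cross3_eq_crossProduct]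

theorem cross3_smul_right (a : ℝ) (u v : E3) : cross3 u (a • v) = a • cross3 u v := by
  simp [cross3_eq_crossProduct]

theorem cross3_self (u : E3) : cross3 u u = 0 := by
  simp [cross3_eq_crossProduct]

theorem cross3_cross3 (u v w : E3) : cross3 u (cross3 v w) = ⟪u, w⟫ • v - ⟪u, v⟫ • w := by
  rw [cross3_eq_crossProduct, cross3_eq_crossProduct, E3.inner_eq_dotProduct,
    E3.inner_eq_dotProduct]
  simp [cross_cross_eq_smul_sub_smul', dotProduct_comm]

section PairRotation

variable {F : Type*} [AddCommGroup F] [Module ℝ F]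

def pairRotation (a : ℝ) : F × F ≃ F × F where
  toFun p := (cos a • p.1 + sin a • p.2, (-sin a) • p.1 + cos a • p.2)
  invFun p := (cos a • p.1 - sin a • p.2, sin a • p.1 + cos a • p.2)
  left_inv p := by
    ext <;> dsimp only <;> match_scalars <;> linarith [sin_sq_add_cos_sq a]
  right_inv p := by
    ext <;> dsimp only <;> match_scalars <;> linarith [sin_sq_add_cos_sq a]

@[simp]
theorem pairRotation_apply (a : ℝ) (u v : F) :
    pairRotation a (u, v) = (cos a • u + sin a • v, (-sin a) • u + cos a • v) := rfl

theorem pairRotation_neg (a : ℝ) :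
    (pairRotation (-a) : F × F ≃ F × F) = (pairRotation a).symm := by
  ext p <;> simp [pairRotation, sub_eq_add_neg]

end PairRotation

structure IsPosFrame (T N B : E3) : Prop where
  norm_T : ‖T‖ = 1
  norm_N : ‖N‖ = 1
  norm_B : ‖B‖ = 1
  inner_T_N : ⟪T, N⟫ = 0
  inner_T_B : ⟪T, B⟫ = 0
  inner_N_B : ⟪N, B⟫ = 0
  N_eq_cross3 : N = cross3 B T

namespace IsPosFrame

variable {T N B : E3}

theorem cross3_T_N (h : IsPosFrame T N B) : cross3 T N = B := by
  rw [h.N_eq_cross3, cross3_cross3, real_inner_self_eq_norm_sq, h.norm_T, h.inner_T_B]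
  simp

theorem cross3_B_N (h : IsPosFrame T N B) : cross3 B N = -T := by
  rw [h.N_eq_cross3, cross3_cross3, real_inner_self_eq_norm_sq, h.norm_B, real_inner_comm,
    h.inner_T_B]
  simp

theorem cycle (h : IsPosFrame T N B) : IsPosFrame N B T :=
  ⟨h.norm_N, h.norm_B, h.norm_T, h.inner_N_B, by rw [real_inner_comm, h.inner_T_N],
    by rw [real_inner_comm, h.inner_T_B], h.cross3_T_N.symm⟩

theorem rotate (h : IsPosFrame T N B) (a : ℝ) :
    IsPosFrame (pairRotation a (T, N)).1 (pairRotation a (T, N)).2 B := by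
  simp only [pairRotation_apply]
  refine ⟨norm_smul_add_smul_eq_one h.norm_T h.norm_N h.inner_T_N (cos_sq_add_sin_sq a),
    norm_smul_add_smul_eq_one h.norm_T h.norm_N h.inner_T_N
      (by rw [neg_sq]; exact sin_sq_add_cos_sq a),
    h.norm_B, ?_, ?_, ?_, ?_⟩
  · simp only [inner_add_left, inner_add_right, real_inner_smul_left, real_inner_smul_right,
      real_inner_self_eq_norm_sq, h.norm_T, h.norm_N, h.inner_T_N, real_inner_comm T N]
    ring
  · simp [inner_add_left, real_inner_smul_left, h.inner_T_B, h.inner_N_B]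
  · simp [inner_add_left, real_inner_smul_left, h.inner_T_B, h.inner_N_B]
  · rw [cross3_add_right, cross3_smul_right, cross3_smul_right, ← h.N_eq_cross3, h.cross3_B_N]
    module

end IsPosFrame

theorem isPosFrame_cycle_iff {T N B : E3} : IsPosFrame N B T ↔ IsPosFrame T N B :=
  ⟨fun h => h.cycle.cycle, IsPosFrame.cycle⟩

theorem isPosFrame_pairRotation_iff {T N B : E3} (a : ℝ) :
    IsPosFrame (pairRotation a (T, N)).1 (pairRotation a (T, N)).2 B ↔ IsPosFrame T N B := by
  refine ⟨fun h => ?_, fun h => h.rotate a⟩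
  simpa only [pairRotation_neg, Prod.mk.eta, Equiv.symm_apply_apply] using h.rotate (-a)

def frameStep (θ φ : ℤ → ℝ) (i : ℤ) : E3 × E3 × E3 ≃ E3 × E3 × E3 :=
  if Even i then
    ((Equiv.prodAssoc E3 E3 E3).symm.trans ((pairRotation (θ i)).prodCongr (Equiv.refl E3))).trans
      (Equiv.prodAssoc E3 E3 E3)
  else (Equiv.refl E3).prodCongr (pairRotation (φ i))

section FrameStep

variable {θ φ : ℤ → ℝ} {i : ℤ}

theorem frameStep_of_even (hi : Even i) (T N B : E3) :
    frameStep θ φ i (T, N, B) =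
      (cos (θ i) • T + sin (θ i) • N, (-sin (θ i)) • T + cos (θ i) • N, B) := by
  simp [frameStep, hi]

theorem frameStep_of_odd (hi : Odd i) (T N B : E3) :
    frameStep θ φ i (T, N, B) =
      (T, cos (φ i) • N + sin (φ i) • B, (-sin (φ i)) • N + cos (φ i) • B) := by
  simp [frameStep, Int.not_even_iff_odd.mpr hi]

theorem isPosFrame_frameStep_iff (p : E3 × E3 × E3) :
    IsPosFrame (frameStep θ φ i p).1 (frameStep θ φ i p).2.1 (frameStep θ φ i p).2.2 ↔
      IsPosFrame p.1 p.2.1 p.2.2 := by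
  obtain ⟨T, N, B⟩ := p
  rcases Int.even_or_odd i with hi | hi
  · rw [frameStep_of_even hi]
    exact isPosFrame_pairRotation_iff (θ i)
  · rw [frameStep_of_odd hi]
    dsimp only
    rw [← isPosFrame_cycle_iff, ← isPosFrame_cycle_iff (T := T) (N := N) (B := B)]
    exact isPosFrame_pairRotation_iff (φ i)

end FrameStep

structure SolvesFrameEquations (θ φ : ℤ → ℝ) (γ T N B : ℤ → E3) : Prop where
  isPosFrame : ∀ i, IsPosFrame (T i) (N i) (B i)
  γ_succ : ∀ i, γ (i + 1) = γ i + T i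
  step_of_even : ∀ i, Even i →
    T (i + 1) = cos (θ i) • T i + sin (θ i) • N i ∧
    N (i + 1) = (-sin (θ i)) • T i + cos (θ i) • N i ∧
    B (i + 1) = B i
  step_of_odd : ∀ i, Odd i →
    T (i + 1) = T i ∧
    N (i + 1) = cos (φ i) • N i + sin (φ i) • B i ∧
    B (i + 1) = (-sin (φ i)) • N i + cos (φ i) • B i

theorem exists_solvesFrameEquations (θ φ : ℤ → ℝ) (γ₀ : E3) {T₀ N₀ B₀ : E3}
    (h₀ : IsPosFrame T₀ N₀ B₀) :
    ∃ γ T N B : ℤ → E3, γ 0 = γ₀ ∧ T 0 = T₀ ∧ N 0 = N₀ ∧ B 0 = B₀ ∧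
      SolvesFrameEquations θ φ γ T N B := by
  obtain ⟨F, hF₀, hF⟩ := Int.exists_seq_of_equiv (frameStep θ φ) (T₀, N₀, B₀)
  obtain ⟨γ, hγ₀, hγ⟩ := Int.exists_seq_of_equiv (fun i => Equiv.addRight (F i).1) γ₀
  refine ⟨γ, fun i => (F i).1, fun i => (F i).2.1, fun i => (F i).2.2, hγ₀, by simp [hF₀],
    by simp [hF₀], by simp [hF₀], ⟨?_, hγ, ?_, ?_⟩⟩
  · refine Int.forall_of_step_iff (P := fun p => IsPosFrame p.1 p.2.1 p.2.2) hF
      (fun i p => isPosFrame_frameStep_iff p) ?_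
    simpa [hF₀] using h₀
  · intro i hi
    simp [hF i, frameStep_of_even hi]
  · intro i hi
    simp [hF i, frameStep_of_odd hi]

namespace SolvesFrameEquations

variable {θ φ : ℤ → ℝ} {γ T N B : ℤ → E3}

theorem T_eq_sub (h : SolvesFrameEquations θ φ γ T N B) (i : ℤ) : T i = γ (i + 1) - γ i := by
  rw [h.γ_succ, add_sub_cancel_left]

theorem norm_sub_eq_one (h : SolvesFrameEquations θ φ γ T N B) (i : ℤ) :
    ‖γ (i + 1) - γ i‖ = 1 := by
  rw [← h.T_eq_sub]
  exact (h.isPosFrame i).norm_T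

theorem T_sub_one_of_even (h : SolvesFrameEquations θ φ γ T N B) {i : ℤ} (hi : Even i) :
    T (i - 1) = T i := by
  have := (h.step_of_odd (i - 1) (hi.sub_odd odd_one)).1
  rwa [sub_add_cancel, eq_comm] at this

theorem B_eq_B_sub_one_of_odd (h : SolvesFrameEquations θ φ γ T N B) {i : ℤ} (hi : Odd i) :
    B i = B (i - 1) := by
  have := (h.step_of_even (i - 1) (hi.sub_odd odd_one)).2.2
  rwa [sub_add_cancel] at this

theorem midpoint_of_even (h : SolvesFrameEquations θ φ γ T N B) {i : ℤ} (hi : Even i) :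
    γ i = (2 : ℝ)⁻¹ • (γ (i + 1) + γ (i - 1)) := by
  have hprev := h.γ_succ (i - 1)
  rw [sub_add_cancel, h.T_sub_one_of_even hi] at hprev
  rw [h.γ_succ, hprev]
  module

theorem cross3_T_succ_of_even (h : SolvesFrameEquations θ φ γ T N B) {i : ℤ} (hi : Even i) :
    cross3 (T i) (T (i + 1)) = sin (θ i) • B i := by
  rw [(h.step_of_even i hi).1, cross3_add_right, cross3_smul_right, cross3_smul_right,
    cross3_self, (h.isPosFrame i).cross3_T_N, smul_zero, zero_add]

theorem cross3_T_succ_ne_zero (h : SolvesFrameEquations θ φ γ T N B) {i : ℤ} (hi : Even i)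
    (hθ : sin (θ i) ≠ 0) : cross3 (T i) (T (i + 1)) ≠ 0 := by
  rw [h.cross3_T_succ_of_even hi]
  exact smul_ne_zero hθ (ne_zero_of_norm_ne_zero (by simp [(h.isPosFrame i).norm_B]))

theorem B_eq_normalize_cross3 (h : SolvesFrameEquations θ φ γ T N B) {i : ℤ} (hi : Even i)
    (hθ : 0 < sin (θ i)) :
    B i = ‖cross3 (T i) (T (i + 1))‖⁻¹ • cross3 (T i) (T (i + 1)) := by
  rw [h.cross3_T_succ_of_even hi, norm_smul, (h.isPosFrame i).norm_B, Real.norm_of_nonneg hθ.le,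
    mul_one, smul_smul, inv_mul_cancel₀ hθ.ne', one_smul]

theorem inner_B_succ_N_of_odd (h : SolvesFrameEquations θ φ γ T N B) {i : ℤ} (hi : Odd i) :
    ⟪B (i + 1), N i⟫ = -sin (φ i) := by
  have hf := h.isPosFrame i
  rw [(h.step_of_odd i hi).2.2, inner_add_left, real_inner_smul_left, real_inner_smul_left,
    real_inner_self_eq_norm_sq, hf.norm_N, real_inner_comm, hf.inner_N_B]
  ring

theorem angle_T_succ (h : SolvesFrameEquations θ φ γ T N B)
    (hθe : ∀ i, Even i → θ i ∈ Set.Icc 0 π) (hθo : ∀ i, Odd i → θ i = 0) (i : ℤ) :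
    InnerProductGeometry.angle (T i) (T (i + 1)) = θ i := by
  have hf := h.isPosFrame i
  rcases Int.even_or_odd i with hi | hi
  · refine angle_eq_of_inner_eq_cos hf.norm_T (h.isPosFrame (i + 1)).norm_T ?_
      (hθe i hi).1 (hθe i hi).2
    rw [(h.step_of_even i hi).1, inner_add_right, real_inner_smul_right, real_inner_smul_right,
      real_inner_self_eq_norm_sq, hf.norm_T, hf.inner_T_N]
    ring
  · rw [(h.step_of_odd i hi).1, hθo i hi,
      InnerProductGeometry.angle_self (ne_zero_of_norm_ne_zero (by simp [hf.norm_T]))]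

theorem angle_B_succ (h : SolvesFrameEquations θ φ γ T N B)
    (hφo : ∀ i, Odd i → φ i ∈ Set.Icc 0 π) (hφe : ∀ i, Even i → φ i = 0) (i : ℤ) :
    InnerProductGeometry.angle (B i) (B (i + 1)) = φ i := by
  have hf := h.isPosFrame i
  rcases Int.even_or_odd i with hi | hi
  · rw [(h.step_of_even i hi).2.2, hφe i hi,
      InnerProductGeometry.angle_self (ne_zero_of_norm_ne_zero (by simp [hf.norm_B]))]
  · refine angle_eq_of_inner_eq_cos hf.norm_B (h.isPosFrame (i + 1)).norm_B ?_
      (hφo i hi).1 (hφo i hi).2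
    rw [(h.step_of_odd i hi).2.2, inner_add_right, real_inner_smul_right, real_inner_smul_right,
      real_inner_self_eq_norm_sq, hf.norm_B, real_inner_comm, hf.inner_N_B]
    ring

end SolvesFrameEquations

/-- Discrete fundamental theorem (existence): given turning angles `θ` (supported on even
indices, with values in `(0, π/2]` there) and twisting angles `φ` (supported on odd indices,
with values in `[0, π/2]` there), and an initial point together with an initial positively
oriented orthonormal frame, there is a discrete curve, unique solution of the discrete frame
equations, realizing these data; it is parametrized by arc length, satisfies the midpoint
condition, its edge Frenet frame is the constructed frame, the positive-twist condition
holds, and `θᵢ`, `φᵢ` are the angles between consecutive tangents and binormals. -/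
theorem discrete_fundamental_theorem_existence
    (θ φ : ℤ → ℝ)
    (hθe : ∀ i : ℤ, Even i → θ i ∈ Set.Ioc 0 (Real.pi / 2))
    (hθo : ∀ i : ℤ, Odd i → θ i = 0)
    (hφo : ∀ i : ℤ, Odd i → φ i ∈ Set.Icc 0 (Real.pi / 2))
    (hφe : ∀ i : ℤ, Even i → φ i = 0)
    (γ₀ T₀ N₀ B₀ : E3)
    (hT₀ : ‖T₀‖ = 1) (hN₀ : ‖N₀‖ = 1) (hB₀ : ‖B₀‖ = 1)
    (hTN₀ : ⟪T₀, N₀⟫ = 0) (hTB₀ : ⟪T₀, B₀⟫ = 0) (hNB₀ : ⟪N₀, B₀⟫ = 0)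
    (hor₀ : N₀ = cross3 B₀ T₀) :
    ∃ γ T N B : ℤ → E3,
      γ 0 = γ₀ ∧ T 0 = T₀ ∧ N 0 = N₀ ∧ B 0 = B₀ ∧
      (∀ i : ℤ, γ (i + 1) = γ i + T i) ∧
      (∀ i : ℤ, Even i →
        T (i + 1) = Real.cos (θ i) • T i + Real.sin (θ i) • N i ∧
        N (i + 1) = (-Real.sin (θ i)) • T i + Real.cos (θ i) • N i ∧
        B (i + 1) = B i) ∧
      (∀ i : ℤ, Odd i →
        T (i + 1) = T i ∧
        N (i + 1) = Real.cos (φ i) • N i + Real.sin (φ i) • B i ∧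
        B (i + 1) = (-Real.sin (φ i)) • N i + Real.cos (φ i) • B i) ∧
      (∀ i : ℤ, ‖γ (i + 1) - γ i‖ = 1) ∧
      (∀ i : ℤ, Even i → γ i = (2 : ℝ)⁻¹ • (γ (i + 1) + γ (i - 1))) ∧
      (∀ i : ℤ, T i = γ (i + 1) - γ i) ∧
      (∀ i : ℤ, Even i → cross3 (T i) (T (i + 1)) ≠ 0) ∧
      (∀ i : ℤ, Even i →
        B i = ‖cross3 (T i) (T (i + 1))‖⁻¹ • cross3 (T i) (T (i + 1))) ∧
      (∀ i : ℤ, Odd i → B i = B (i - 1)) ∧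
      (∀ i : ℤ, N i = cross3 (B i) (T i)) ∧
      (∀ i : ℤ, Odd i → ⟪B (i + 1), N i⟫ ≤ 0) ∧
      (∀ i : ℤ, InnerProductGeometry.angle (T i) (T (i + 1)) = θ i) ∧
      (∀ i : ℤ, InnerProductGeometry.angle (B i) (B (i + 1)) = φ i) := by
  obtain ⟨γ, T, N, B, hγ₀, hT₀', hN₀', hB₀', h⟩ :=
    exists_solvesFrameEquations θ φ γ₀ ⟨hT₀, hN₀, hB₀, hTN₀, hTB₀, hNB₀, hor₀⟩
  have hπ : π / 2 ≤ π := by linarith [pi_pos]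
  have hθ : ∀ i, Even i → θ i ∈ Set.Icc 0 π := fun i hi =>
    ⟨(hθe i hi).1.le, (hθe i hi).2.trans hπ⟩
  have hφ : ∀ i, Odd i → φ i ∈ Set.Icc 0 π := fun i hi => ⟨(hφo i hi).1, (hφo i hi).2.trans hπ⟩
  have hsinθ : ∀ i, Even i → 0 < sin (θ i) := fun i hi =>
    sin_pos_of_pos_of_lt_pi (hθe i hi).1 (by linarith [(hθe i hi).2, pi_pos])
  refine ⟨γ, T, N, B, hγ₀, hT₀', hN₀', hB₀', h.γ_succ, h.step_of_even, h.step_of_odd,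
    h.norm_sub_eq_one, fun i hi => h.midpoint_of_even hi, h.T_eq_sub,
    fun i hi => h.cross3_T_succ_ne_zero hi (hsinθ i hi).ne',
    fun i hi => h.B_eq_normalize_cross3 hi (hsinθ i hi), fun i hi => h.B_eq_B_sub_one_of_odd hi,
    fun i => (h.isPosFrame i).N_eq_cross3, fun i hi => ?_, h.angle_T_succ hθ hθo,
    h.angle_B_succ hφ hφe⟩
  rw [h.inner_B_succ_N_of_odd hi, neg_nonpos]
  exact sin_nonneg_of_nonneg_of_le_pi (hφ i hi).1 (hφ i hi).2
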